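/- On ℝ⁴ ∖ {0} with r(p) = ‖p‖, let a¹, a², a³ be the 1-forms a¹(p)(v) = (−p₁v₀ + p₀v₁ + p₃v₂ − p₂v₃)/r², a²(p)(v) = (−p₂v₀ − p₃v₁ + p₀v₂ + p₁v₃)/r², a³(p)(v) = (−p₃v₀ + p₂v₁ − p₁v₂ + p₀v₃)/r², and let a⁰ = dr, a⁰(p)(v) = (p₀v₀ + p₁v₁ + p₂v₂ + p₃v₃)/r. Let f, h : (0,∞) → ℝ be smooth with f and h nowhere vanishing, and define the regularized coframe Ê⁰(p)(v) = f(r)·a⁰(p)(v), Êⁱ(p)(v) = h(r)·aⁱ(p)(v). Then dÊ⁰ = 0, and with A(r) = h'(r)/(f(r)h(r)) and B(r) = 1/h(r): dÊ¹ = A Ê⁰∧Ê¹ − 2B Ê²∧Ê³, dÊ² = A Ê⁰∧Ê² + 2B Ê¹∧Ê³, dÊ³ = A Ê⁰∧Ê³ − 2B Ê¹∧Ê² (all evaluated at r = ‖p‖). (Hence the Levi–Civita connection of the regularized frame is ω̂^i{}_0 = A Êⁱ, ω̂^i{}_j = B ε^i{}_{jk} Êᵏ, as used in the gravitational Meisner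 effect.) -/

import Mathlib

noncomputable section

/-- Exterior derivative of a 1-form on `ℝ⁴` (Euclidean). -/
def exd (η : EuclideanSpace ℝ (Fin 4) → (EuclideanSpace ℝ (Fin 4) →L[ℝ] ℝ))
    (p u v : EuclideanSpace ℝ (Fin 4)) : ℝ :=
  (fderiv ℝ η p u) v - (fderiv ℝ η p v) u

/-- Wedge product of two 1-forms on `ℝ⁴` (Euclidean). -/
def wedge (η ξ : EuclideanSpace ℝ (Fin 4) → (EuclideanSpace ℝ (Fin 4) →L[ℝ] ℝ))
    (p u v : EuclideanSpace ℝ (Fin 4)) : ℝ :=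
  η p u * ξ p v - η p v * ξ p u

/-- The global frame `a⁰ = dr`, `aⁱ = Eⁱ/r` on `ℝ⁴ ∖ {0} ≅ S³ × (0,∞)`. -/
def aForm : Fin 4 → EuclideanSpace ℝ (Fin 4) → (EuclideanSpace ℝ (Fin 4) →L[ℝ] ℝ) :=
  ![fun p => (1 / ‖p‖) • (p 0 • EuclideanSpace.proj (0 : Fin 4)
      + p 1 • EuclideanSpace.proj (1 : Fin 4)
      + p 2 • EuclideanSpace.proj (2 : Fin 4)
      + p 3 • EuclideanSpace.proj (3 : Fin 4)),
    fun p => (1 / ‖p‖ ^ 2) • ((-p 1) • EuclideanSpace.proj (0 : Fin 4)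
      + p 0 • EuclideanSpace.proj (1 : Fin 4)
      + p 3 • EuclideanSpace.proj (2 : Fin 4)
      + (-p 2) • EuclideanSpace.proj (3 : Fin 4)),
    fun p => (1 / ‖p‖ ^ 2) • ((-p 2) • EuclideanSpace.proj (0 : Fin 4)
      + (-p 3) • EuclideanSpace.proj (1 : Fin 4)
      + p 0 • EuclideanSpace.proj (2 : Fin 4)
      + p 1 • EuclideanSpace.proj (3 : Fin 4)),
    fun p => (1 / ‖p‖ ^ 2) • ((-p 3) • EuclideanSpace.proj (0 : Fin 4)
      + p 2 • EuclideanSpace.proj (1 : Fin 4)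
      + (-p 1) • EuclideanSpace.proj (2 : Fin 4)
      + p 0 • EuclideanSpace.proj (3 : Fin 4))]

/-- The regularized coframe `Ê⁰ = f(r)·a⁰`, `Êⁱ = h(r)·aⁱ`. -/
def Ehat (f h : ℝ → ℝ) :
    Fin 4 → EuclideanSpace ℝ (Fin 4) → (EuclideanSpace ℝ (Fin 4) →L[ℝ] ℝ) :=
  ![fun p => f ‖p‖ • aForm 0 p,
    fun p => h ‖p‖ • aForm 1 p,
    fun p => h ‖p‖ • aForm 2 p,
    fun p => h ‖p‖ • aForm 3 p]

abbrev E4 := EuclideanSpace ℝ (Fin 4)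

def pr (i : Fin 4) : E4 →L[ℝ] ℝ := EuclideanSpace.proj i

def Qq1 : E4 →L[ℝ] E4 →L[ℝ] ℝ :=
  (-(pr 1)).smulRight (pr 0) + (pr 0).smulRight (pr 1) + (pr 3).smulRight (pr 2)
    + (-(pr 2)).smulRight (pr 3)
def Qq2 : E4 →L[ℝ] E4 →L[ℝ] ℝ :=
  (-(pr 2)).smulRight (pr 0) + (-(pr 3)).smulRight (pr 1) + (pr 0).smulRight (pr 2)
    + (pr 1).smulRight (pr 3)
def Qq3 : E4 →L[ℝ] E4 →L[ℝ] ℝ :=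
  (-(pr 3)).smulRight (pr 0) + (pr 2).smulRight (pr 1) + (-(pr 1)).smulRight (pr 2)
    + (pr 0).smulRight (pr 3)

lemma Qq1_apply (x y : E4) :
    Qq1 x y = -(x 1) * y 0 + x 0 * y 1 + x 3 * y 2 - x 2 * y 3 := by
  simp [Qq1, pr, ContinuousLinearMap.smulRight_apply]; ring
lemma Qq2_apply (x y : E4) :
    Qq2 x y = -(x 2) * y 0 - x 3 * y 1 + x 0 * y 2 + x 1 * y 3 := by
  simp [Qq2, pr, ContinuousLinearMap.smulRight_apply]; ring
lemma Qq3_apply (x y : E4) :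
    Qq3 x y = -(x 3) * y 0 + x 2 * y 1 - x 1 * y 2 + x 0 * y 3 := by
  simp [Qq3, pr, ContinuousLinearMap.smulRight_apply]; ring

lemma ip_coords (x y : E4) :
    (inner ℝ x y) = x 0 * y 0 + x 1 * y 1 + x 2 * y 2 + x 3 * y 3 := by
  simp [PiLp.inner_apply, RCLike.inner_apply, Fin.sum_univ_four]
  ring

lemma Ehat0_eq (f h : ℝ → ℝ) :
    Ehat f h 0 = fun x : E4 => (f ‖x‖ * ‖x‖⁻¹) • (innerSL ℝ x : E4 →L[ℝ] ℝ) := by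
  funext x; ext v
  simp [Ehat, aForm, PiLp.inner_apply, RCLike.inner_apply, Fin.sum_univ_four]
  ring
lemma Ehat1_eq (f h : ℝ → ℝ) :
    Ehat f h 1 = fun x : E4 => (h ‖x‖ * (‖x‖ ^ 2)⁻¹) • Qq1 x := by
  funext x; ext v
  simp [Ehat, aForm, Qq1, pr, ContinuousLinearMap.smulRight_apply]
  ring
lemma Ehat2_eq (f h : ℝ → ℝ) :
    Ehat f h 2 = fun x : E4 => (h ‖x‖ * (‖x‖ ^ 2)⁻¹) • Qq2 x := by
  funext x; ext v
  simp [Ehat, aForm, Qq2, pr, ContinuousLinearMap.smulRight_apply]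
  ring
lemma Ehat3_eq (f h : ℝ → ℝ) :
    Ehat f h 3 = fun x : E4 => (h ‖x‖ * (‖x‖ ^ 2)⁻¹) • Qq3 x := by
  funext x; ext v
  simp [Ehat, aForm, Qq3, pr, ContinuousLinearMap.smulRight_apply]
  ring

lemma hasFDerivAt_norm' (p : E4) (hp : p ≠ 0) :
    HasFDerivAt (fun x : E4 => ‖x‖) (‖p‖⁻¹ • innerSL ℝ p) p := by
  have h1 : HasFDerivAt (fun x : E4 => ‖x‖ ^ 2) (2 • innerSL ℝ p) p :=
    (hasStrictFDerivAt_norm_sq p).hasFDerivAt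
  have h2 := h1.sqrt (pow_ne_zero 2 (norm_ne_zero_iff.mpr hp))
  have hfun : (fun x : E4 => Real.sqrt (‖x‖ ^ 2)) = fun x : E4 => ‖x‖ := by
    funext x; rw [Real.sqrt_sq (norm_nonneg x)]
  rw [hfun] at h2
  refine h2.congr_fderiv (ContinuousLinearMap.ext fun v => ?_)
  rw [Real.sqrt_sq (norm_nonneg p)]
  simp only [ContinuousLinearMap.smul_apply, smul_eq_mul, ContinuousLinearMap.coe_smul',
    Pi.smul_apply, nsmul_eq_mul]
  have : ‖p‖ ≠ 0 := norm_ne_zero_iff.mpr hp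
  field_simp
  ring

lemma exd_smul (φ : ℝ → ℝ) (φ' : ℝ) (Q : E4 →L[ℝ] E4 →L[ℝ] ℝ) (p : E4) (hp : p ≠ 0)
    (hφ : HasDerivAt φ φ' ‖p‖) (u v : E4) :
    exd (fun x => φ ‖x‖ • Q x) p u v =
      φ' * ‖p‖⁻¹ * ((inner ℝ p u) * Q p v - (inner ℝ p v) * Q p u)
      + φ ‖p‖ * (Q u v - Q v u) := by
  have hc : HasFDerivAt (fun x : E4 => φ ‖x‖) (φ' • (‖p‖⁻¹ • innerSL ℝ p)) p :=
    hφ.comp_hasFDerivAt p (hasFDerivAt_norm' p hp)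
  have hF := hc.smul (Q.hasFDerivAt (x := p))
  rw [exd, show (fun x : E4 => φ ‖x‖ • Q x) = ((fun x : E4 => φ ‖x‖) • (⇑Q : E4 → E4 →L[ℝ] ℝ)) from rfl, hF.fderiv]
  simp only [ContinuousLinearMap.add_apply, ContinuousLinearMap.smul_apply,
    ContinuousLinearMap.smulRight_apply, innerSL_apply_apply, smul_eq_mul]
  ring


set_option maxHeartbeats 1000000 in
/-- Structure equations of the regularized coframe used in the gravitational
Meisner effect: `dÊ⁰ = 0`, `dÊ¹ = A Ê⁰∧Ê¹ − 2B Ê²∧Ê³`,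
`dÊ² = A Ê⁰∧Ê² + 2B Ê¹∧Ê³`, `dÊ³ = A Ê⁰∧Ê³ − 2B Ê¹∧Ê²`, where
`A = h'/(f h)` and `B = 1/h`. -/
theorem regularized_coframe_structure_equations (f h : ℝ → ℝ)
    (hf : ContDiffOn ℝ (⊤ : ℕ∞) f (Set.Ioi 0)) (hh : ContDiffOn ℝ (⊤ : ℕ∞) h (Set.Ioi 0))
    (hf_ne : ∀ r ∈ Set.Ioi (0 : ℝ), f r ≠ 0)
    (hh_ne : ∀ r ∈ Set.Ioi (0 : ℝ), h r ≠ 0)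
    (A B : ℝ → ℝ)
    (hA : ∀ r ∈ Set.Ioi (0 : ℝ), A r = deriv h r / (f r * h r))
    (hB : ∀ r ∈ Set.Ioi (0 : ℝ), B r = 1 / h r)
    (p : EuclideanSpace ℝ (Fin 4)) (hp : p ≠ 0)
    (u v : EuclideanSpace ℝ (Fin 4)) :
    exd (Ehat f h 0) p u v = 0 ∧
    exd (Ehat f h 1) p u v = A ‖p‖ * wedge (Ehat f h 0) (Ehat f h 1) p u v
      - 2 * B ‖p‖ * wedge (Ehat f h 2) (Ehat f h 3) p u v ∧
    exd (Ehat f h 2) p u v = A ‖p‖ * wedge (Ehat f h 0) (Ehat f h 2) p u v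
      + 2 * B ‖p‖ * wedge (Ehat f h 1) (Ehat f h 3) p u v ∧
    exd (Ehat f h 3) p u v = A ‖p‖ * wedge (Ehat f h 0) (Ehat f h 3) p u v
      - 2 * B ‖p‖ * wedge (Ehat f h 1) (Ehat f h 2) p u v := by
  have hr : (0:ℝ) < ‖p‖ := norm_pos_iff.mpr hp
  have hrne : ‖p‖ ≠ 0 := hr.ne'
  have hrI : ‖p‖ ∈ Set.Ioi (0:ℝ) := hr
  have hfd : DifferentiableAt ℝ f ‖p‖ :=
    (hf.contDiffAt (isOpen_Ioi.mem_nhds hr)).differentiableAt (by simp)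
  have hhd : DifferentiableAt ℝ h ‖p‖ :=
    (hh.contDiffAt (isOpen_Ioi.mem_nhds hr)).differentiableAt (by simp)
  have hd1 := (hhd.hasDerivAt).mul ((hasDerivAt_pow 2 ‖p‖).inv (pow_ne_zero 2 hrne))
  have hr2 : ‖p‖ ^ 2 = p 0 ^ 2 + p 1 ^ 2 + p 2 ^ 2 + p 3 ^ 2 := by
    rw [← real_inner_self_eq_norm_sq, ip_coords]; ring
  have hFne : f ‖p‖ ≠ 0 := hf_ne _ hrI
  have hHne : h ‖p‖ ≠ 0 := hh_ne _ hrI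
  refine ⟨?_, ?_, ?_, ?_⟩
  · have hd0 := (hfd.hasDerivAt).mul (hasDerivAt_inv hrne)
    have E0 : exd (fun x : E4 => (f ‖x‖ * ‖x‖⁻¹) • (innerSL ℝ x : E4 →L[ℝ] ℝ)) p u v =
        (deriv f ‖p‖ * ‖p‖⁻¹ + f ‖p‖ * -(‖p‖ ^ 2)⁻¹) * ‖p‖⁻¹ *
          ((inner ℝ p u) * (innerSL ℝ p) v - (inner ℝ p v) * (innerSL ℝ p) u)
        + (f ‖p‖ * ‖p‖⁻¹) * ((innerSL ℝ u) v - (innerSL ℝ v) u) :=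
      exd_smul _ _ _ p hp hd0 u v
    rw [Ehat0_eq, E0]
    simp only [innerSL_apply_apply]
    rw [real_inner_comm v u]
    ring
  · have E : exd (fun x : E4 => (h ‖x‖ * (‖x‖ ^ 2)⁻¹) • Qq1 x) p u v =
        (deriv h ‖p‖ * (‖p‖ ^ 2)⁻¹ + h ‖p‖ * (-(↑2 * ‖p‖ ^ 1) / (‖p‖ ^ 2) ^ 2)) * ‖p‖⁻¹ *
          ((inner ℝ p u) * Qq1 p v - (inner ℝ p v) * Qq1 p u)
        + (h ‖p‖ * (‖p‖ ^ 2)⁻¹) * (Qq1 u v - Qq1 v u) :=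
      exd_smul _ _ _ p hp hd1 u v
    rw [Ehat1_eq, E, wedge, wedge, hA _ hrI, hB _ hrI]
    simp only [Ehat0_eq, Ehat1_eq, Ehat2_eq, Ehat3_eq, ContinuousLinearMap.smul_apply,
      innerSL_apply_apply, smul_eq_mul, Qq1_apply, Qq2_apply, Qq3_apply, ip_coords]
    field_simp
    linear_combination ((2 : ℝ) * h ‖p‖ * u 3 * v 2 + (-2 : ℝ) * h ‖p‖ * u 2 * v 3 + (-2 : ℝ) * h ‖p‖ * u 1 * v 0 + (2 : ℝ) * h ‖p‖ * u 0 * v 1) * hr2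
  · have E : exd (fun x : E4 => (h ‖x‖ * (‖x‖ ^ 2)⁻¹) • Qq2 x) p u v =
        (deriv h ‖p‖ * (‖p‖ ^ 2)⁻¹ + h ‖p‖ * (-(↑2 * ‖p‖ ^ 1) / (‖p‖ ^ 2) ^ 2)) * ‖p‖⁻¹ *
          ((inner ℝ p u) * Qq2 p v - (inner ℝ p v) * Qq2 p u)
        + (h ‖p‖ * (‖p‖ ^ 2)⁻¹) * (Qq2 u v - Qq2 v u) :=
      exd_smul _ _ _ p hp hd1 u v
    rw [Ehat2_eq, E, wedge, wedge, hA _ hrI, hB _ hrI]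
    simp only [Ehat0_eq, Ehat1_eq, Ehat2_eq, Ehat3_eq, ContinuousLinearMap.smul_apply,
      innerSL_apply_apply, smul_eq_mul, Qq1_apply, Qq2_apply, Qq3_apply, ip_coords]
    field_simp
    linear_combination ((-2 : ℝ) * h ‖p‖ * u 3 * v 1 + (-2 : ℝ) * h ‖p‖ * u 2 * v 0 + (2 : ℝ) * h ‖p‖ * u 1 * v 3 + (2 : ℝ) * h ‖p‖ * u 0 * v 2) * hr2
  · have E : exd (fun x : E4 => (h ‖x‖ * (‖x‖ ^ 2)⁻¹) • Qq3 x) p u v =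
        (deriv h ‖p‖ * (‖p‖ ^ 2)⁻¹ + h ‖p‖ * (-(↑2 * ‖p‖ ^ 1) / (‖p‖ ^ 2) ^ 2)) * ‖p‖⁻¹ *
          ((inner ℝ p u) * Qq3 p v - (inner ℝ p v) * Qq3 p u)
        + (h ‖p‖ * (‖p‖ ^ 2)⁻¹) * (Qq3 u v - Qq3 v u) :=
      exd_smul _ _ _ p hp hd1 u v
    rw [Ehat3_eq, E, wedge, wedge, hA _ hrI, hB _ hrI]
    simp only [Ehat0_eq, Ehat1_eq, Ehat2_eq, Ehat3_eq, ContinuousLinearMap.smul_apply,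
      innerSL_apply_apply, smul_eq_mul, Qq1_apply, Qq2_apply, Qq3_apply, ip_coords]
    field_simp
    linear_combination ((-2 : ℝ) * h ‖p‖ * u 3 * v 0 + (2 : ℝ) * h ‖p‖ * u 2 * v 1 + (-2 : ℝ) * h ‖p‖ * u 1 * v 2 + (2 : ℝ) * h ‖p‖ * u 0 * v 3) * hr2

end
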